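/- arXiv:2601.10779 — 6 statements merged into one kernel-verified Lean document; each statement's English description precedes it below -/
import Mathlib

section
/- For fixed positive reals N₀, n₁, t, the function f(w) = (N₀ + w²n₁)/(N₀ + w·n₁)² + (w²n₁²·t)/(N₀ + w·n₁)² over w ≥ 0 attains its minimum at w* = 1/(1 + t·n₁). -/
/-! With `a = 1 + t n₁`, completing the square gives
`f w = a / (a N₀ + n₁) + N₀ n₁ (a w - 1)² / ((a N₀ + n₁) (N₀ + w n₁)²)`,
so `f` is the constant `a / (a N₀ + n₁)` plus a nonnegative term vanishing exactly at `w = 1 / a`. -/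

theorem transfer_error_eq_add_sq {K : Type*} [Field K] (N₀ n₁ t w : K)
    (hw : N₀ + w * n₁ ≠ 0) (ha : (1 + t * n₁) * N₀ + n₁ ≠ 0) :
    (N₀ + w ^ 2 * n₁) / (N₀ + w * n₁) ^ 2 + w ^ 2 * n₁ ^ 2 * t / (N₀ + w * n₁) ^ 2
      = (1 + t * n₁) / ((1 + t * n₁) * N₀ + n₁)
        + N₀ * n₁ * ((1 + t * n₁) * w - 1) ^ 2 / (((1 + t * n₁) * N₀ + n₁) * (N₀ + w * n₁) ^ 2) := by
  have hw2 := pow_ne_zero 2 hw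
  rw [← add_div, div_add_div _ _ ha (mul_ne_zero ha hw2),
    div_eq_div_iff hw2 (mul_ne_zero ha (mul_ne_zero ha hw2))]
  ring

/-- For fixed positive reals `N₀, n₁, t`, the function
`f(w) = (N₀ + w²n₁)/(N₀ + w n₁)² + (w²n₁²t)/(N₀ + w n₁)²` over `w ≥ 0`
attains its minimum at `w* = 1/(1 + t n₁)`. -/
theorem single_source_optimal_weight
    (N₀ n₁ t : ℝ) (hN₀ : 0 < N₀) (hn₁ : 0 < n₁) (ht : 0 < t)
    (f : ℝ → ℝ)
    (hf : ∀ w, f w = (N₀ + w ^ 2 * n₁) / (N₀ + w * n₁) ^ 2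
        + (w ^ 2 * n₁ ^ 2 * t) / (N₀ + w * n₁) ^ 2) :
    ∀ w, 0 ≤ w → f (1 / (1 + t * n₁)) ≤ f w := by
  intro w hw
  have ha : 0 < 1 + t * n₁ := by positivity
  have hf_sq : ∀ v, 0 ≤ v → f v = (1 + t * n₁) / ((1 + t * n₁) * N₀ + n₁)
      + N₀ * n₁ * ((1 + t * n₁) * v - 1) ^ 2
        / (((1 + t * n₁) * N₀ + n₁) * (N₀ + v * n₁) ^ 2) := fun v hv => by
    rw [hf, transfer_error_eq_add_sq] <;> positivity
  rw [hf_sq _ (by positivity), hf_sq w hw, mul_one_div_cancel ha.ne', sub_self,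
    zero_pow two_ne_zero, mul_zero, zero_div, add_zero]
  exact le_add_of_nonneg_right (by positivity)
end

section
/- For fixed positive reals N₀, t and with the weight set to its optimal value w(n) = 1/(1 + t·n), the resulting error g(n) = (N₀ + w(n)²n + w(n)²n²t)/(N₀ + w(n)n)² is strictly decreasing in n > 0; equivalently its derivative equals -(1/2)·(1 + n t)/(N₀ + n + N₀ n t) · (a positive factor), and in particular g is minimized over n ∈ (0, N₁] at n = N₁. -/
/-- With the weight set to its optimal value `w(n) = 1/(1 + t n)`, the resulting
single-source error `g(n)` is strictly decreasing in `n > 0`, and in particular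
is minimized over `(0, N₁]` at `n = N₁`. -/
theorem optimal_quantity_all_samples
    (N₀ t N₁ : ℝ) (hN₀ : 0 < N₀) (ht : 0 < t) (hN₁ : 0 < N₁)
    (w : ℝ → ℝ) (hw : ∀ n, w n = 1 / (1 + t * n))
    (g : ℝ → ℝ)
    (hg : ∀ n, g n = (N₀ + (w n) ^ 2 * n + (w n) ^ 2 * n ^ 2 * t)
        / (N₀ + w n * n) ^ 2) :
    (∀ n m : ℝ, 0 < n → n < m → g m < g n) ∧
    (∀ n : ℝ, 0 < n → n ≤ N₁ → g N₁ ≤ g n) := by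
  have key : ∀ n : ℝ, 0 < n → g n = 1 / (N₀ + n / (1 + t * n)) := by
    intro n hn
    have h1 : (0:ℝ) < 1 + t * n := by positivity
    rw [hg, hw]
    field_simp
    ring
  have pos : ∀ n : ℝ, 0 < n → 0 < N₀ + n / (1 + t * n) := by
    intro n hn
    have h1 : (0:ℝ) < 1 + t * n := by positivity
    positivity
  have mono : ∀ n m : ℝ, 0 < n → n < m → g m < g n := by
    intro n m hn hnm
    have hm : 0 < m := hn.trans hnm
    rw [key n hn, key m hm]
    apply one_div_lt_one_div_of_lt (pos n hn)
    have h1 : (0:ℝ) < 1 + t * n := by positivity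
    have h2 : (0:ℝ) < 1 + t * m := by positivity
    have : n / (1 + t * n) < m / (1 + t * m) := by
      rw [div_lt_div_iff₀ h1 h2]
      nlinarith
    linarith
  refine ⟨mono, fun n hn hle => ?_⟩
  rcases eq_or_lt_of_le hle with h | h
  · rw [h]
  · exact le_of_lt (mono n N₁ hn h)
end

section
/- Let N₀ > 0, t > 0, and h(s) = N₀/(N₀+s)² + s²t/(N₀+s)² for s ≥ 0, so that h(0) = 1/N₀. Then h(s) < h(0) for all s ∈ (0, 2/t), and h is strictly decreasing on [0, 1/t]. -/
/-- For `N₀ > 0`, `t > 0`, and `h(s) = N₀/(N₀+s)² + s²t/(N₀+s)²`: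
`h(0) = 1/N₀`, `h(s) < h(0)` for all `s ∈ (0, 2/t)`, and `h` is strictly
decreasing on `[0, 1/t]`. -/
theorem transfer_beneficial_range
    (N₀ t : ℝ) (hN₀ : 0 < N₀) (ht : 0 < t)
    (h : ℝ → ℝ)
    (hh : ∀ s, h s = N₀ / (N₀ + s) ^ 2 + s ^ 2 * t / (N₀ + s) ^ 2) :
    h 0 = 1 / N₀ ∧
    (∀ s, 0 < s → s < 2 / t → h s < h 0) ∧
    StrictAntiOn h (Set.Icc 0 (1 / t)) := by
  have h0 : h 0 = 1 / N₀ := by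
    rw [hh]; field_simp; ring
  refine ⟨h0, ?_, ?_⟩
  · intro s hs hs2
    rw [h0, hh]
    have hst : s * t < 2 := by
      rw [lt_div_iff₀ ht] at hs2; linarith
    have hden : 0 < (N₀ + s) ^ 2 := by positivity
    rw [← add_div, div_lt_div_iff₀ hden hN₀]
    nlinarith [mul_pos hN₀ hs, mul_lt_mul_of_pos_left hst (mul_pos hN₀ hs)]
  · intro a ha b hb hab
    obtain ⟨ha0, ha1⟩ := ha
    obtain ⟨hb0, hb1⟩ := hb
    have hta : t * a < 1 := by
      have : a < 1 / t := lt_of_lt_of_le hab hb1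
      rw [lt_div_iff₀ ht] at this; linarith
    have htb : t * b ≤ 1 := by
      rw [le_div_iff₀ ht] at hb1; linarith
    have hda : 0 < (N₀ + a) ^ 2 := by positivity
    have hdb : 0 < (N₀ + b) ^ 2 := by positivity
    rw [hh, hh, ← add_div, ← add_div, div_lt_div_iff₀ hdb hda]
    have key : t * (N₀ * (a + b) + 2 * a * b) < 2 * N₀ + a + b := by
      have h1 : N₀ * (t * a) < N₀ * 1 := mul_lt_mul_of_pos_left hta hN₀
      have h2 : N₀ * (t * b) ≤ N₀ * 1 := mul_le_mul_of_nonneg_left htb hN₀.le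
      have h3 : (2 * a) * (t * b) ≤ (2 * a) * 1 :=
        mul_le_mul_of_nonneg_left htb (by linarith)
      nlinarith
    nlinarith [mul_pos (mul_pos hN₀ (sub_pos.mpr hab)) (sub_pos.mpr key)]
end

section
/- For probability distributions P, Q on a finite set with P(x), Q(x) > 0, the Kullback–Leibler divergence satisfies D(P‖Q) ≥ (1/2)·Σ_x (Q(x)−P(x))²/max(P(x),Q(x)) ≥ 0; in particular D(P‖Q) ≥ 0 with equality iff P = Q. -/
/-!
Pointwise, `p log (p / q) + q - p ≥ (q - p)² / (2 max(p, q))` for `p, q > 0`, and the correction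
terms `q - p` sum to zero because `P` and `Q` are both probability distributions. For fixed `p`,
the pointwise bound says that `t ↦ t - p log t - (t - p)² / (2 max(p, t))` is minimal at `t = p`:
on `t ≤ p` its derivative is `-(t - p)² / (p t) ≤ 0`, on `t ≥ p` it is `(t - p)² / (2 t²) ≥ 0`.
-/

open Finset Real

lemma hasDerivAt_sub_mul_log (p : ℝ) {t : ℝ} (ht : t ≠ 0) :
    HasDerivAt (fun t => t - p * log t) (1 - p / t) t :=
  ((hasDerivAt_id' t).sub ((hasDerivAt_log ht).const_mul p)).congr_deriv (by field_simp)

lemma sq_sub_div_two_mul_le_of_le {p q : ℝ} (hq : 0 < q) (hqp : q ≤ p) :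
    (q - p) ^ 2 / (2 * p) ≤ p * log (p / q) + q - p := by
  have hp : 0 < p := hq.trans_le hqp
  set g : ℝ → ℝ := fun t => t - p * log t - (t - p) ^ 2 / (2 * p)
  have hderiv : ∀ t, 0 < t → HasDerivAt g (-(t - p) ^ 2 / (p * t)) t := fun t ht =>
    ((hasDerivAt_sub_mul_log p ht.ne').sub
      ((((hasDerivAt_id' t).sub_const p).fun_pow 2).div_const (2 * p))).congr_deriv
      (by field_simp; ring)
  have hanti : AntitoneOn g (Set.Ioc 0 p) := by
    refine antitoneOn_of_hasDerivWithinAt_nonpos (convex_Ioc 0 p)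
      (fun t ht => (hderiv t ht.1).continuousAt.continuousWithinAt)
      (fun t ht => (hderiv t (interior_subset ht).1).hasDerivWithinAt) fun t ht => ?_
    have ht : 0 < t := (interior_subset ht).1
    exact div_nonpos_of_nonpos_of_nonneg (neg_nonpos.2 (sq_nonneg _)) (by positivity)
  have hgpq := hanti ⟨hq, hqp⟩ ⟨hp, le_rfl⟩ hqp
  simp only [g, sub_self, zero_pow two_ne_zero, zero_div, sub_zero] at hgpq
  rw [log_div hp.ne' hq.ne']
  linarith

lemma sq_sub_div_two_mul_le_of_ge {p q : ℝ} (hp : 0 < p) (hpq : p ≤ q) :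
    (q - p) ^ 2 / (2 * q) ≤ p * log (p / q) + q - p := by
  set g : ℝ → ℝ := fun t => t - p * log t - (t - p) ^ 2 / (2 * t)
  have hderiv : ∀ t, 0 < t → HasDerivAt g ((t - p) ^ 2 / (2 * t ^ 2)) t := fun t ht =>
    ((hasDerivAt_sub_mul_log p ht.ne').sub
      ((((hasDerivAt_id' t).sub_const p).fun_pow 2).div ((hasDerivAt_id' t).const_mul 2)
        (by positivity))).congr_deriv (by field_simp; ring)
  have hmono : MonotoneOn g (Set.Ici p) :=
    monotoneOn_of_hasDerivWithinAt_nonneg (convex_Ici p)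
      (fun t ht => (hderiv t (hp.trans_le ht)).continuousAt.continuousWithinAt)
      (fun t ht => (hderiv t (hp.trans_le (interior_subset ht))).hasDerivWithinAt)
      fun t _ => by positivity
  have hgpq := hmono Set.self_mem_Ici hpq hpq
  simp only [g, sub_self, zero_pow two_ne_zero, zero_div, sub_zero] at hgpq
  rw [log_div hp.ne' (hp.trans_le hpq).ne']
  linarith

lemma sq_sub_div_two_mul_max_le {p q : ℝ} (hp : 0 < p) (hq : 0 < q) :
    (q - p) ^ 2 / (2 * max p q) ≤ p * log (p / q) + q - p := by
  rcases le_total q p with h | h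
  · rw [max_eq_left h]
    exact sq_sub_div_two_mul_le_of_le hq h
  · rw [max_eq_right h]
    exact sq_sub_div_two_mul_le_of_ge hp h

/-- For positive probability distributions `P, Q` on a finite set, the KL
divergence satisfies
`D(P‖Q) ≥ (1/2)·Σ_x (Q(x)−P(x))²/max(P(x),Q(x)) ≥ 0`; in particular
`D(P‖Q) ≥ 0` with equality iff `P = Q`. -/
theorem kl_lower_bound_quadratic
    (𝒳 : Type*) [Fintype 𝒳]
    (P Q : 𝒳 → ℝ)
    (hP : ∀ x, 0 < P x) (hPsum : ∑ x, P x = 1)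
    (hQ : ∀ x, 0 < Q x) (hQsum : ∑ x, Q x = 1) :
    ((1 : ℝ) / 2) * ∑ x, (Q x - P x) ^ 2 / max (P x) (Q x) ≤
      ∑ x, P x * Real.log (P x / Q x) ∧
    0 ≤ ((1 : ℝ) / 2) * ∑ x, (Q x - P x) ^ 2 / max (P x) (Q x) ∧
    (0 ≤ ∑ x, P x * Real.log (P x / Q x)) ∧
    (∑ x, P x * Real.log (P x / Q x) = 0 ↔ P = Q) := by
  have hmax : ∀ x, 0 < max (P x) (Q x) := fun x => (hP x).trans_le (le_max_left _ _)
  have hterm : ∀ x, 0 ≤ (Q x - P x) ^ 2 / max (P x) (Q x) :=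
    fun x => div_nonneg (sq_nonneg _) (hmax x).le
  have hkl : ∑ x, P x * log (P x / Q x) = ∑ x, (P x * log (P x / Q x) + Q x - P x) := by
    simp only [sum_sub_distrib, sum_add_distrib, hPsum, hQsum, add_sub_cancel_right]
  have hbound : (1 : ℝ) / 2 * ∑ x, (Q x - P x) ^ 2 / max (P x) (Q x) ≤
      ∑ x, P x * log (P x / Q x) := by
    rw [hkl, mul_sum]
    refine sum_le_sum fun x _ => ?_
    calc (1 : ℝ) / 2 * ((Q x - P x) ^ 2 / max (P x) (Q x))
        = (Q x - P x) ^ 2 / (2 * max (P x) (Q x)) := by ring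
      _ ≤ _ := sq_sub_div_two_mul_max_le (hP x) (hQ x)
  have hnonneg : 0 ≤ (1 : ℝ) / 2 * ∑ x, (Q x - P x) ^ 2 / max (P x) (Q x) :=
    mul_nonneg (by norm_num) (sum_nonneg fun x _ => hterm x)
  refine ⟨hbound, hnonneg, hnonneg.trans hbound, fun h0 => ?_, ?_⟩
  · have hsum : ∑ x, (Q x - P x) ^ 2 / max (P x) (Q x) = 0 := by linarith
    funext x
    have hx := (sum_eq_zero_iff_of_nonneg fun x _ => hterm x).1 hsum x (mem_univ x)
    rw [div_eq_zero_iff, or_iff_left (hmax x).ne', sq_eq_zero_iff, sub_eq_zero] at hx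
    exact hx.symm
  · rintro rfl
    simp [div_self (hP _).ne']
end

section
/- Let M ∈ ℝ^{K×K} be symmetric positive definite and let t* = min{αᵀMα : α in the probability simplex}. Then t* > 0, and for the two-stage optimization min_{s≥0} [N₀/(N₀+s)² + (s²/(N₀+s)²)·t*] the optimal value of s is s* = 1/t* and the overall minimum value equals t*/(1 + N₀t*)·(times the factor d/2 in the paper's scaling). -/
open Finset Matrix

/-!
A positive definite quadratic form is positive at every nonzero vector, in particular at every
point of the simplex, so `t* > 0`. For the outer problem, clearing denominators gives
`F s - t*/(1 + N₀ t*) = N₀ (1 - s t*)² / ((N₀ + s)² (1 + N₀ t*))`, which is nonnegative and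
vanishes exactly at `s = 1/t*`.
-/

theorem Matrix.PosDef.dotProduct_mulVec_pos_of_sum_eq_one {ι : Type*} [Fintype ι]
    {M : Matrix ι ι ℝ} (hM : M.PosDef) {α : ι → ℝ} (hα : ∑ i, α i = 1) :
    0 < α ⬝ᵥ M *ᵥ α := by
  have hα_ne : α ≠ 0 := by
    rintro rfl
    simp at hα
  simpa using (posDef_iff_dotProduct_mulVec.mp hM).2 hα_ne

section OuterObjective

noncomputable def outerObjective (N₀ t s : ℝ) : ℝ :=
  N₀ / (N₀ + s) ^ 2 + s ^ 2 / (N₀ + s) ^ 2 * t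

variable {N₀ t : ℝ}

theorem outerObjective_sub_eq (s : ℝ) (hs : N₀ + s ≠ 0) (ht : 1 + N₀ * t ≠ 0) :
    outerObjective N₀ t s - t / (1 + N₀ * t)
      = N₀ * (1 - s * t) ^ 2 / ((N₀ + s) ^ 2 * (1 + N₀ * t)) := by
  unfold outerObjective
  field_simp
  ring

theorem outerObjective_one_div (hN₀ : 0 < N₀) (ht : 0 < t) :
    outerObjective N₀ t (1 / t) = t / (1 + N₀ * t) := by
  have h := outerObjective_sub_eq (1 / t) (by positivity : 0 < N₀ + 1 / t).ne'
    (by positivity : 0 < 1 + N₀ * t).ne'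
  rwa [one_div_mul_cancel ht.ne', sub_self, zero_pow two_ne_zero, mul_zero, zero_div,
    sub_eq_zero] at h

theorem le_outerObjective (hN₀ : 0 < N₀) (ht : 0 < t) {s : ℝ} (hs : 0 ≤ s) :
    t / (1 + N₀ * t) ≤ outerObjective N₀ t s := by
  rw [← sub_nonneg,
    outerObjective_sub_eq s (by positivity) (by positivity : 0 < 1 + N₀ * t).ne']
  positivity

end OuterObjective

/-- Let `M` be symmetric positive definite and `t*` the minimum of `αᵀMα` over
the probability simplex. Then `t* > 0`, and for the outer optimization
`min_{s≥0} N₀/(N₀+s)² + (s²/(N₀+s)²)·t*` the optimal `s` is `s* = 1/t*`, with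
overall minimum value `t*/(1 + N₀ t*)`. -/
theorem two_stage_optimization
    (K : ℕ) (N₀ : ℝ) (hN₀ : 0 < N₀)
    (M : Matrix (Fin K) (Fin K) ℝ) (hM : M.PosDef)
    (tstar : ℝ)
    (htstar : IsLeast
      {v : ℝ | ∃ α : Fin K → ℝ, (∀ i, 0 ≤ α i) ∧ (∑ i, α i = 1) ∧
        v = α ⬝ᵥ M.mulVec α} tstar)
    (F : ℝ → ℝ)
    (hF : ∀ s, F s = N₀ / (N₀ + s) ^ 2 + s ^ 2 / (N₀ + s) ^ 2 * tstar) :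
    0 < tstar ∧
    (∀ s, 0 ≤ s → F (1 / tstar) ≤ F s) ∧
    F (1 / tstar) = tstar / (1 + N₀ * tstar) := by
  obtain ⟨α, -, hα_sum, rfl⟩ := htstar.1
  have ht := hM.dotProduct_mulVec_pos_of_sum_eq_one hα_sum
  have hval : F (1 / _) = _ := (hF _).trans (outerObjective_one_div hN₀ ht)
  exact ⟨ht, fun s hs => hval ▸ (hF s).symm ▸ le_outerObjective hN₀ ht hs, hval⟩
end

section
/- Let f(w) = (N₀ + w²n₁(1 + n₁t))/(N₀ + wn₁)² with N₀, n₁ > 0 and t ≥ 0, and let w* = 1/(1+tn₁). Then the minimum value is f(w*) = (1 + n₁t)/(N₀ + N₀n₁t + n₁) = 1/(N₀ + n₁/(1+n₁t)), which is strictly less than f(0) = 1/N₀. -/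
/-- With `f(w) = (N₀ + w²n₁(1+n₁t))/(N₀+wn₁)²` and `w* = 1/(1+tn₁)`, the
minimum value is `f(w*) = (1+n₁t)/(N₀+N₀n₁t+n₁) = 1/(N₀+n₁/(1+n₁t))`, which is
strictly less than `f(0) = 1/N₀`. -/
theorem optimal_error_value
    (N₀ n₁ t : ℝ) (hN₀ : 0 < N₀) (hn₁ : 0 < n₁) (ht : 0 ≤ t)
    (f : ℝ → ℝ)
    (hf : ∀ w, f w = (N₀ + w ^ 2 * n₁ * (1 + n₁ * t)) / (N₀ + w * n₁) ^ 2)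
    (wstar : ℝ) (hw : wstar = 1 / (1 + t * n₁)) :
    f wstar = (1 + n₁ * t) / (N₀ + N₀ * n₁ * t + n₁) ∧
    f wstar = 1 / (N₀ + n₁ / (1 + n₁ * t)) ∧
    f 0 = 1 / N₀ ∧
    f wstar < f 0 := by
  have hA : (0:ℝ) < 1 + t * n₁ := by positivity
  have hA' : (0:ℝ) < 1 + n₁ * t := by positivity
  have hD : (0:ℝ) < N₀ + N₀ * n₁ * t + n₁ := by positivity
  have hden : (0:ℝ) < N₀ + wstar * n₁ := by
    rw [hw]; positivity
  have h1 : f wstar = (1 + n₁ * t) / (N₀ + N₀ * n₁ * t + n₁) := by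
    rw [hf, hw]
    rw [div_eq_div_iff (by positivity) hD.ne']
    field_simp
  have h2 : f wstar = 1 / (N₀ + n₁ / (1 + n₁ * t)) := by
    rw [h1]
    rw [div_eq_div_iff hD.ne' (by positivity)]
    field_simp
  have h3 : f 0 = 1 / N₀ := by
    rw [hf]; field_simp; ring
  refine ⟨h1, h2, h3, ?_⟩
  rw [h2, h3]
  apply one_div_lt_one_div_of_lt hN₀
  have : 0 < n₁ / (1 + n₁ * t) := by positivity
  linarith
end
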